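/- For every n ≥ 1, the polynomial identity Σ_{π ∈ Π_n} ( ∏_{B a block of π} |B|^{|B|−1} ) · x^{|π|} = x·(x+n)^{n−1} holds (as an identity of polynomials in x with integer coefficients); that is, the zeta-type enumerator with weights w(m) = m^{m−1} is the n-th Abel polynomial. -/

import Mathlib

/-!
Removing the block that contains a fixed element `a` splits a partition of a `(p+1)`-set into a
block `{a} ∪ T` and a partition of the rest, so the enumerator `E` only depends on the size of the
set and satisfies `E_{p+1} = x ∑ⱼ C(p,j) (j+1)^j E_{p-j}`, `E_0 = 1`. The Abel polynomials
`A_n = x (x+n)^{n-1}` satisfy the same recursion: it is Abel's identity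
`∑ₖ C(n,k) A_k(x) (y+n-k)^{n-k} = (x+y+n)^n` at `y = 1`. That identity is proved by induction on
`n`: its `y`-derivative is `n` times the case `n-1` at `y+1`, and at `y = -(x+n)` the right side
vanishes while the left side becomes `± x` times an `n`-th finite difference of `(x+k)^{n-1}`.
-/

open Finset Polynomial

namespace Finpartition

lemma notMem_parts_of_disjoint {α : Type*} [Lattice α] [OrderBot α] {a b : α}
    (P : Finpartition a) (hb : b ≠ ⊥) (hab : Disjoint a b) : b ∉ P.parts :=
  fun h ↦ hb (hab.symm.eq_bot_of_le (P.le h))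

variable {α : Type*} [GeneralizedBooleanAlgebra α] [DecidableEq α] {b c : α}

lemma parts_avoid_of_mem (P : Finpartition c) (hb : b ∈ P.parts) :
    (P.avoid b).parts = P.parts.erase b := by
  ext d
  simp only [mem_avoid, mem_erase]
  constructor
  · rintro ⟨e, he, heb, rfl⟩
    have hne : e ≠ b := by rintro rfl; exact heb le_rfl
    have hdisj : Disjoint e b := P.disjoint he hb hne
    rw [hdisj.sdiff_eq_left]
    exact ⟨hne, he⟩
  · rintro ⟨hne, hd⟩
    have hdisj : Disjoint d b := P.disjoint hd hb hne
    exact ⟨d, hd, fun hdb ↦ P.ne_bot hd (hdisj.eq_bot_of_le hdb), hdisj.sdiff_eq_left⟩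

lemma extend_avoid (hb : b ≠ ⊥) (hdisj : Disjoint (c \ b) b) (hsup : c \ b ⊔ b = c)
    (P : Finpartition c) (hP : b ∈ P.parts) :
    (P.avoid b).extend hb hdisj hsup = P :=
  Finpartition.ext (by rw [extend_parts, parts_avoid_of_mem P hP, insert_erase hP])

lemma avoid_extend (hb : b ≠ ⊥) (hdisj : Disjoint (c \ b) b) (hsup : c \ b ⊔ b = c)
    (P : Finpartition (c \ b)) : (P.extend hb hdisj hsup).avoid b = P :=
  Finpartition.ext (by
    rw [parts_avoid_of_mem _ (by rw [extend_parts]; exact mem_insert_self _ _), extend_parts,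
      erase_insert (P.notMem_parts_of_disjoint hb hdisj)])

end Finpartition

section PartitionEnumerator

variable {R α : Type*} [CommSemiring R] [DecidableEq α]

noncomputable def partitionEnumerator (w : ℕ → R) (s : Finset α) : R[X] :=
  ∑ π : Finpartition s, C (∏ B ∈ π.parts, w #B) * X ^ #π.parts

lemma partitionEnumerator_empty (w : ℕ → R) : partitionEnumerator w (∅ : Finset α) = 1 := by
  rw [partitionEnumerator, show (∅ : Finset α) = ⊥ from rfl, Fintype.sum_unique,
    Finpartition.parts_eq_empty_iff.2 rfl]
  simp

lemma partitionEnumerator_eq_sum_powerset (w : ℕ → R) {s : Finset α} {a : α} (ha : a ∈ s) :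
    partitionEnumerator w s = ∑ T ∈ (s.erase a).powerset,
      C (w (#T + 1)) * X * partitionEnumerator w (s \ insert a T) := by
  rw [partitionEnumerator, ← sum_fiberwise_of_maps_to (g := fun π ↦ (π.part a).erase a)
    (t := (s.erase a).powerset) fun π _ ↦ mem_powerset.2 (erase_subset_erase a (π.part_subset a))]
  refine sum_congr rfl fun T hT ↦ ?_
  have haT : a ∉ T := fun h ↦ (mem_erase.1 (mem_powerset.1 hT h)).1 rfl
  have hTs : insert a T ⊆ s := insert_subset ha ((mem_powerset.1 hT).trans (erase_subset a s))
  have hne : insert a T ≠ ⊥ := insert_ne_empty a T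
  have hdisj : Disjoint (s \ insert a T) (insert a T) := sdiff_disjoint
  have hsup : s \ insert a T ⊔ insert a T = s := sdiff_union_of_subset hTs
  have hfiber {π : Finpartition s} : (π.part a).erase a = T ↔ π.part a = insert a T := by
    constructor
    · rintro rfl; exact (insert_erase (π.mem_part_self.2 ha)).symm
    · intro h; rw [h, erase_insert haT]
  rw [partitionEnumerator, mul_sum]
  symm
  refine sum_nbij' (fun π ↦ π.extend hne hdisj hsup) (fun π ↦ π.avoid (insert a T))
    (fun π _ ↦ ?_) (fun _ _ ↦ mem_univ _) (fun π _ ↦ Finpartition.avoid_extend hne hdisj hsup π)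
    (fun π hπ ↦ ?_) (fun π _ ↦ ?_)
  · rw [mem_filter, hfiber]
    exact ⟨mem_univ _, (π.extend hne hdisj hsup).part_eq_of_mem (mem_insert_self _ _)
      (mem_insert_self a T)⟩
  · refine Finpartition.extend_avoid hne hdisj hsup π ?_
    rw [← hfiber.1 (mem_filter.1 hπ).2]
    exact π.part_mem.2 ha
  · have hnotMem := π.notMem_parts_of_disjoint hne hdisj
    rw [Finpartition.extend_parts, prod_insert hnotMem, card_insert_of_notMem hnotMem,
      card_insert_of_notMem haT, map_mul, pow_succ]
    ring

theorem partitionEnumerator_eq_of_recursion (w : ℕ → R) (f : ℕ → R[X]) (h0 : f 0 = 1)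
    (hrec : ∀ p, f (p + 1) = ∑ j ∈ range (p + 1), p.choose j • (C (w (j + 1)) * X * f (p - j)))
    (s : Finset α) : partitionEnumerator w s = f #s := by
  induction s using Finset.strongInduction with | H s ih => ?_
  obtain rfl | ⟨a, ha⟩ := s.eq_empty_or_nonempty
  · rw [partitionEnumerator_empty, card_empty, h0]
  rw [partitionEnumerator_eq_sum_powerset w ha, ← card_erase_add_one ha, hrec, sum_powerset]
  refine sum_congr rfl fun j _ ↦ ?_
  rw [← sum_powersetCard j (s.erase a) fun m ↦ C (w (m + 1)) * X * f (#(s.erase a) - m)]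
  refine sum_congr rfl fun T hT ↦ ?_
  have hTs := (mem_powersetCard.1 hT).1
  have haT : a ∉ T := fun h ↦ (mem_erase.1 (hTs h)).1 rfl
  have hinsert : insert a T ⊆ s := insert_subset ha (hTs.trans (erase_subset a s))
  rw [ih _ (sdiff_ssubset hinsert (insert_nonempty a T)), card_sdiff_of_subset hinsert,
    card_insert_of_notMem haT, ← card_erase_add_one ha, Nat.add_sub_add_right]

end PartitionEnumerator

lemma sum_neg_one_pow_mul_choose_smul_add_pow_eq_zero {R : Type*} [CommRing R] {d n : ℕ}
    (h : d < n) (x : R) :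
    ∑ k ∈ range (n + 1), ((-1 : ℤ) ^ (n - k) * n.choose k) • (x + k) ^ d = 0 := by
  simpa [fwdDiff_iter_eq_sum_shift] using congr_fun (fwdDiff_iter_pow_eq_zero_of_lt (R := R) h) x

lemma Polynomial.eq_of_derivative_eq_of_eval_eq {R : Type*} [Ring R] [IsAddTorsionFree R]
    {p q : R[X]} (a : R) (hd : derivative p = derivative q) (he : p.eval a = q.eval a) : p = q := by
  have hC := eq_C_of_derivative_eq_zero (p := p - q) (by rw [derivative_sub, hd, sub_self])
  have h0 : (p - q).coeff 0 = 0 := by simpa [he] using (congrArg (eval a) hC).symm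
  rwa [h0, map_zero, sub_eq_zero] at hC

/-- `abelPoly n = X * (X + n) ^ (n - 1)` for `n ≥ 1`, but `abelPoly 0 = 1`, the value of the
partition enumerator at the empty set. -/
noncomputable def abelPoly : ℕ → ℤ[X]
  | 0 => 1
  | n + 1 => X * (X + ((n + 1 : ℕ) : ℤ[X])) ^ n

lemma abelPoly_mul_X_add_pow {k n : ℕ} (hk : k ≤ n + 1) :
    abelPoly k * (X + (k : ℤ[X])) ^ (n + 1 - k) = X * (X + (k : ℤ[X])) ^ n := by
  cases k with
  | zero => simp [abelPoly, pow_succ']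
  | succ j => rw [abelPoly, mul_assoc, ← pow_add, show j + (n + 1 - (j + 1)) = n by omega]

/-- The left side of Abel's identity in `ℤ[x][y]`, with `x = C X` and `y = X`. -/
noncomputable def abelSum (n : ℕ) : ℤ[X][X] :=
  ∑ k ∈ range (n + 1),
    (n.choose k : ℤ[X][X]) * C (abelPoly k) * (X + ((n - k : ℕ) : ℤ[X][X])) ^ (n - k)

lemma derivative_abelSum_succ (n : ℕ) :
    derivative (abelSum (n + 1)) = (n + 1) * (abelSum n).comp (X + 1) := by
  have hlast : derivative (((n + 1).choose (n + 1) : ℤ[X][X]) * C (abelPoly (n + 1))) = 0 := by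
    rw [derivative_mul, derivative_natCast, derivative_C, zero_mul, mul_zero, add_zero]
  rw [abelSum, abelSum, derivative_sum, sum_range_succ, Nat.sub_self, pow_zero, mul_one, hlast,
    add_zero, Polynomial.sum_comp, mul_sum]
  refine sum_congr rfl fun k hk ↦ ?_
  have hk : k ≤ n := mem_range_succ_iff.1 hk
  have hchoose : (n + 1).choose k * (n - k + 1) = (n + 1) * n.choose k := by
    rw [show n - k + 1 = n + 1 - k by omega, ← Nat.choose_mul_succ_eq, mul_comm]
  rw [show n + 1 - k = n - k + 1 by omega]
  simp only [derivative_mul, derivative_natCast, derivative_C, derivative_pow, derivative_add,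
    derivative_X, zero_mul, mul_zero, zero_add, add_zero, mul_one, Nat.add_sub_cancel, mul_comp,
    natCast_comp, C_comp, pow_comp, add_comp, X_comp]
  have hc : ((n + 1).choose k * (n - k + 1 : ℕ) : ℤ[X][X]) = (n + 1) * n.choose k := by
    exact_mod_cast hchoose
  rw [map_natCast]
  push_cast at hc ⊢
  linear_combination (C (abelPoly k) * (X + 1 + ((n - k : ℕ) : ℤ[X][X])) ^ (n - k)) * hc

lemma eval_abelSum_succ (n : ℕ) : (abelSum (n + 1)).eval (-(X + ((n + 1 : ℕ) : ℤ[X]))) = 0 := by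
  have hterm : ∀ k ∈ range (n + 1 + 1), eval (-(X + ((n + 1 : ℕ) : ℤ[X])))
      (((n + 1).choose k : ℤ[X][X]) * C (abelPoly k) *
        (X + ((n + 1 - k : ℕ) : ℤ[X][X])) ^ (n + 1 - k))
      = X * (((-1 : ℤ) ^ (n + 1 - k) * (n + 1).choose k) • (X + (k : ℤ[X])) ^ n) := by
    intro k hk
    have hk : k ≤ n + 1 := mem_range_succ_iff.1 hk
    have hpoint : -(X + ((n + 1 : ℕ) : ℤ[X])) + ((n + 1 - k : ℕ) : ℤ[X]) = -(X + (k : ℤ[X])) := by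
      rw [Nat.cast_sub hk]; ring
    simp only [eval_mul, eval_natCast, eval_C, eval_pow, eval_add, eval_X]
    rw [hpoint, neg_pow, zsmul_eq_mul]
    push_cast
    linear_combination ((-1 : ℤ[X]) ^ (n + 1 - k) * (n + 1).choose k) * abelPoly_mul_X_add_pow hk
  rw [abelSum, eval_finsetSum, sum_congr rfl hterm, ← mul_sum,
    sum_neg_one_pow_mul_choose_smul_add_pow_eq_zero (lt_add_one n), mul_zero]

theorem abelSum_eq (n : ℕ) : abelSum n = (X + C (X + (n : ℤ[X]))) ^ n := by
  induction n with
  | zero => simp [abelSum, abelPoly]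
  | succ n ih =>
    refine eq_of_derivative_eq_of_eval_eq (-(X + ((n + 1 : ℕ) : ℤ[X]))) ?_ ?_
    · rw [derivative_abelSum_succ, ih]
      simp only [map_add, map_natCast, map_one, Nat.cast_add, Nat.cast_one, pow_comp, add_comp,
        X_comp, C_comp, natCast_comp, derivative_pow, derivative_X, derivative_C,
        derivative_natCast, derivative_one, add_zero, mul_one, Nat.add_sub_cancel]
      ring
    · rw [eval_abelSum_succ]
      simp

theorem abelPoly_succ (p : ℕ) : abelPoly (p + 1) =
    ∑ j ∈ range (p + 1), p.choose j • (C (((j + 1 : ℕ) : ℤ) ^ j) * X * abelPoly (p - j)) := by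
  have h := congrArg (eval 1) (abelSum_eq p)
  simp only [abelSum, eval_finsetSum, eval_mul, eval_natCast, eval_C, eval_pow, eval_add,
    eval_X] at h
  rw [abelPoly, show X + ((p + 1 : ℕ) : ℤ[X]) = 1 + (X + (p : ℤ[X])) by push_cast; ring, ← h,
    mul_sum, ← sum_range_reflect]
  refine sum_congr rfl fun j hj ↦ ?_
  have hj : j ≤ p := mem_range_succ_iff.1 hj
  rw [Nat.add_sub_cancel, Nat.sub_sub_self hj, Nat.choose_symm hj, nsmul_eq_mul, map_pow,
    map_natCast]
  push_cast
  ring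

theorem zeta_enumerator_abel (n : ℕ) (hn : 1 ≤ n) :
    ∑ π : Finpartition (univ : Finset (Fin n)),
        C (∏ B ∈ π.parts, (B.card : ℤ) ^ (B.card - 1)) * X ^ π.parts.card
      = X * (X + (n : Polynomial ℤ)) ^ (n - 1) := by
  have h := partitionEnumerator_eq_of_recursion (fun m ↦ (m : ℤ) ^ (m - 1)) abelPoly rfl
    (fun p ↦ by simpa using abelPoly_succ p) (univ : Finset (Fin n))
  obtain ⟨m, rfl⟩ := Nat.exists_eq_add_of_le' hn
  rwa [card_univ, Fintype.card_fin] at h
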